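/- Let F be a finite field of characteristic different from 2 and n a positive integer. Then the set S_n of all n-by-n diagonal matrices over F whose diagonal entries all equal 1 or -1 (signature matrices) is a maximal independent set of the unit graph of the matrix ring M_n(F). -/

import Mathlib

open Pointwise

/-- The unit graph of a ring: distinct `x, y` adjacent iff `x + y` is a unit. -/
def unitGraph (R : Type*) [Ring R] : SimpleGraph R where
  Adj x y := x ≠ y ∧ IsUnit (x + y)
  symm := by
    refine ⟨?_⟩
    rintro x y ⟨h1, h2⟩
    exact ⟨h1.symm, by rwa [add_comm]⟩
  loopless := by refine ⟨?_⟩; rintro x ⟨h, _⟩; exact h rfl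

/-- The unitary Cayley graph of a ring: distinct `x, y` adjacent iff `x - y` is a unit. -/
def cayleyGraph (R : Type*) [Ring R] : SimpleGraph R where
  Adj x y := x ≠ y ∧ IsUnit (x - y)
  symm := by
    refine ⟨?_⟩
    rintro x y ⟨h1, h2⟩
    refine ⟨h1.symm, ?_⟩
    rw [← neg_sub]
    exact h2.neg
  loopless := by refine ⟨?_⟩; rintro x ⟨h, _⟩; exact h rfl

/-- A set of vertices is independent if no two of its elements are adjacent. -/
def IsIndepSet {V : Type*} (G : SimpleGraph V) (A : Set V) : Prop :=
  ∀ ⦃x⦄, x ∈ A → ∀ ⦃y⦄, y ∈ A → ¬ G.Adj x y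

/-- A maximal independent set. -/
def IsMaxIndepSet {V : Type*} (G : SimpleGraph V) (A : Set V) : Prop :=
  IsIndepSet G A ∧ ∀ B, IsIndepSet G B → A ⊆ B → A = B

/-- A graph is well-covered if all maximal independent sets have the same cardinality. -/
def WellCovered {V : Type*} (G : SimpleGraph V) : Prop :=
  ∀ A B : Set V, IsMaxIndepSet G A → IsMaxIndepSet G B → A.ncard = B.ncard

/-!
Two distinct signature matrices differ in some diagonal entry, where their sum has a zero, so
the signature matrices are independent. For maximality, every matrix `M` has a signature `D`
with `M + D` invertible: `det (M + diagonal d)` is affine in the last entry `d n`, with slope the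
leading principal minor of size `n - 1`, which is nonzero by induction; the values at
`d n = 1` and `d n = -1` differ by twice that minor, so as `2 ≠ 0` one of them is nonzero.
-/

lemma isMaxIndepSet_of_forall_exists_adj {V : Type*} {G : SimpleGraph V} {A : Set V}
    (hA : IsIndepSet G A) (hdom : ∀ x ∉ A, ∃ y ∈ A, G.Adj x y) : IsMaxIndepSet G A := by
  refine ⟨hA, fun B hB hAB => hAB.antisymm fun x hxB => ?_⟩
  by_contra hxA
  obtain ⟨y, hyA, hxy⟩ := hdom x hxA
  exact hB hxB (hAB hyA) hxy

namespace Matrix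

section CommRing

variable {ι R : Type*} [Fintype ι] [DecidableEq ι] [CommRing R]

lemma not_isUnit_diagonal_add_diagonal [Nontrivial R] {d e : ι → R}
    (hd : ∀ i, d i = 1 ∨ d i = -1) (he : ∀ i, e i = 1 ∨ e i = -1) (hne : d ≠ e) :
    ¬ IsUnit (diagonal d + diagonal e) := by
  obtain ⟨i, hi⟩ := Function.ne_iff.mp hne
  have hzero : d i + e i = 0 := by
    rcases hd i with h | h <;> rcases he i with h' | h' <;> simp_all
  rw [isUnit_iff_isUnit_det, diagonal_add, det_diagonal,
    Finset.prod_eq_zero (Finset.mem_univ i) hzero]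
  exact not_isUnit_zero

lemma det_add_diagonal_single (A : Matrix ι ι R) (i : ι) (t : R) :
    (A + diagonal (Pi.single i t)).det = A.det + t * A.adjugate i i := by
  have hrow : A + diagonal (Pi.single i t) = A.updateRow i (A i + t • Pi.single i 1) := by
    ext j k
    by_cases hj : j = i
    · subst hj
      by_cases hk : j = k <;> simp [hk, Ne.symm]
    · simp [diagonal_apply, hj]
  rw [hrow, det_updateRow_add, updateRow_eq_self, det_updateRow_smul, adjugate_apply]

end CommRing

lemma exists_sign_det_add_diagonal_single_ne_zero {ι F : Type*} [Fintype ι] [DecidableEq ι]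
    [Field F] (h2 : (2 : F) ≠ 0) (A : Matrix ι ι F) (i : ι) (hA : A.adjugate i i ≠ 0) :
    ∃ s : F, (s = 1 ∨ s = -1) ∧ (A + diagonal (Pi.single i s)).det ≠ 0 := by
  by_contra! h
  have hplus := h 1 (Or.inl rfl)
  have hminus := h (-1) (Or.inr rfl)
  rw [det_add_diagonal_single] at hplus hminus
  exact mul_ne_zero h2 hA (by linear_combination hplus - hminus)

lemma exists_signature_det_add_diagonal_ne_zero {F : Type*} [Field F] (h2 : (2 : F) ≠ 0) :
    ∀ {n : ℕ} (M : Matrix (Fin n) (Fin n) F),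
      ∃ d : Fin n → F, (∀ i, d i = 1 ∨ d i = -1) ∧ (M + diagonal d).det ≠ 0
  | 0, M => ⟨fun _ => 1, fun i => i.elim0, by simp⟩
  | n + 1, M => by
    obtain ⟨d, hd, hdet⟩ :=
      exists_signature_det_add_diagonal_ne_zero h2 (M.submatrix Fin.castSucc Fin.castSucc)
    set A := M + diagonal (Fin.snoc d 0 : Fin (n + 1) → F)
    have hminor : A.adjugate (Fin.last n) (Fin.last n) ≠ 0 := by
      have hsub : A.submatrix Fin.castSucc Fin.castSucc
          = M.submatrix Fin.castSucc Fin.castSucc + diagonal d := by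
        ext j k
        simp [A, diagonal_apply, Fin.castSucc_inj]
      rw [adjugate_fin_succ_eq_det_submatrix, Fin.succAbove_last, hsub, ← two_mul,
        pow_mul, neg_one_sq, one_pow, one_mul]
      exact hdet
    obtain ⟨s, hs, hdetA⟩ := exists_sign_det_add_diagonal_single_ne_zero h2 A _ hminor
    have hsnoc : A + diagonal (Pi.single (Fin.last n) s) = M + diagonal (Fin.snoc d s) := by
      rw [add_assoc, diagonal_add]
      congr 2
      ext i
      refine Fin.lastCases ?_ (fun j => ?_) i
      · simp
      · simp [(Fin.castSucc_lt_last j).ne]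
    refine ⟨Fin.snoc d s, fun i => Fin.lastCases ?_ (fun j => ?_) i, hsnoc ▸ hdetA⟩
    · simpa using hs
    · simpa using hd j

end Matrix

theorem stmt_3_general {F : Type*} [Field F] (hF : ringChar F ≠ 2)
    (n : ℕ) :
    IsMaxIndepSet (unitGraph (Matrix (Fin n) (Fin n) F))
      {M | ∃ d : Fin n → F, (∀ i, d i = 1 ∨ d i = -1) ∧ M = Matrix.diagonal d} := by
  refine isMaxIndepSet_of_forall_exists_adj ?_ fun M hM => ?_
  · rintro _ ⟨d, hd, rfl⟩ _ ⟨e, he, rfl⟩ ⟨hne, hunit⟩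
    exact Matrix.not_isUnit_diagonal_add_diagonal hd he (fun h => hne (h ▸ rfl)) hunit
  · obtain ⟨d, hd, hdet⟩ :=
      Matrix.exists_signature_det_add_diagonal_ne_zero (Ring.two_ne_zero hF) M
    refine ⟨Matrix.diagonal d, ⟨d, hd, rfl⟩, fun h => hM ⟨d, hd, h⟩, ?_⟩
    exact (Matrix.isUnit_iff_isUnit_det _).mpr hdet.isUnit

theorem stmt_3 {F : Type*} [Field F] [Fintype F] (hF : ringChar F ≠ 2)
    (n : ℕ) (hn : 0 < n) :
    IsMaxIndepSet (unitGraph (Matrix (Fin n) (Fin n) F))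
      {M | ∃ d : Fin n → F, (∀ i, d i = 1 ∨ d i = -1) ∧ M = Matrix.diagonal d} :=
  stmt_3_general hF n
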